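/- Let K ⊆ ℝⁿ be a polytope, E ⊆ ℝⁿ a d-dimensional subspace, and u ∈ E^⊥ a vector such that u ∉ P_{E^⊥} N(K,F) for every nonempty face F of K with dim P_{E^⊥} N(K,F) ≤ n-d-1. Let F̃ = {F face of K : u ∈ P_{E^⊥} N(K,F)}. Then the sets {P_E(relint F) : F ∈ F̃} are pairwise disjoint and their union over F ∈ F̃ of P_E F equals P_E K; moreover every F ∈ F̃ has dimension ≤ d, and on each d-dimensional F ∈ F̃ the projection P_E restricts to an affine isomorphism onto P_E F. -/

import Mathlib

open scoped RealInnerProductSpace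
open MeasureTheory
noncomputable section

/-- `F` is a face of the convex set `K`. -/
def IsFace {V : Type*} [AddCommGroup V] [Module ℝ V] (K F : Set V) : Prop :=
  F ⊆ K ∧ Convex ℝ F ∧ ∀ x ∈ K, ∀ y ∈ K, (1 / 2 : ℝ) • (x + y) ∈ F → x ∈ F ∧ y ∈ F

/-- The (affine) dimension of a set. -/
def setDim {n : ℕ} (A : Set (EuclideanSpace ℝ (Fin n))) : ℕ :=
  Module.finrank ℝ (affineSpan ℝ A).direction

/-- The normal cone of the polytope `K` at the face `F`. -/
def normalConeAtFace {n : ℕ} (K F : Set (EuclideanSpace ℝ (Fin n))) :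
    Set (EuclideanSpace ℝ (Fin n)) :=
  {w | ∀ x ∈ F, ∀ z ∈ K, ⟪z - x, w⟫ ≤ 0}

/-!
Genericity of `u` says that for a face `F` with `u ∈ P_{E^⊥} N(K,F)` no nonzero vector of
`E^⊥` is orthogonal to `N(K,F)`. Since `N(K,F)` is orthogonal to the direction of `F`, that
direction meets `E^⊥` trivially, which gives both `dim F ≤ d` and the injectivity of `P_E` on
`F`. Two points of `relint F₁` and `relint F₂` with the same shadow lie in a common exposed face
of this kind, hence coincide, and a point of the relative interior of a face determines the face.

For the covering, maximise `⟪u, z⟫ - c ‖P_E (z - x)‖²` over `K`. The maximiser lies in the face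
exposed by `u - 2c P_E (z - x)`, whose projection to `E^⊥` is `u`, and its shadow tends to
`P_E x` as `c → ∞`. As these faces are among the finitely many compact faces of the polytope,
`P_E x` lies in the shadow of one of them.
-/

open Set Module

section Faces

variable {V : Type*} [AddCommGroup V] [Module ℝ V] {K F : Set V}

theorem IsFace.right_mem_of_convex_combination_mem (hK : Convex ℝ K) (hF : IsFace K F)
    {p q : V} (hp : p ∈ K) (hq : q ∈ K) {t : ℝ} (ht₀ : 0 < t) (ht₁ : t ≤ 1)
    (h : (1 - t) • p + t • q ∈ F) : q ∈ F := by
  obtain ⟨j, hj⟩ := pow_unbounded_of_one_lt t⁻¹ (one_lt_two (α := ℝ))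
  replace hj : 1 ≤ 2 ^ j * t := by rw [inv_lt_iff_one_lt_mul₀ ht₀] at hj; linarith
  -- each midpoint step doubles `t`, until `q` itself is an endpoint
  induction j generalizing t with
  | zero =>
    obtain rfl : t = 1 := by linarith
    simpa using h
  | succ j ih =>
    rcases le_or_gt (1 / 2) t with ht | ht
    · have hm : (2 - 2 * t) • p + (2 * t - 1) • q ∈ K :=
        hK hp hq (by linarith) (by linarith) (by ring)
      refine (hF.2.2 q hq _ hm ?_).1
      convert h using 1; module
    · have hm : (1 - 2 * t) • p + (2 * t) • q ∈ K :=
        hK hp hq (by linarith) (by linarith) (by ring)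
      refine ih (by linarith) (by linarith) (hF.2.2 p hp _ hm ?_).2
        (by rw [pow_succ] at hj; linarith)
      convert h using 1; module

theorem IsFace.isExtreme (hK : Convex ℝ K) (hF : IsFace K F) : IsExtreme ℝ K F := by
  refine ⟨hF.1, fun x₁ hx₁ x₂ hx₂ x hx ⟨a, b, ha, hb, hab, hx_eq⟩ => ?_⟩
  refine hF.right_mem_of_convex_combination_mem hK hx₂ hx₁ ha (by linarith) ?_
  rwa [← hab, add_sub_cancel_left, add_comm, hx_eq]

theorem IsExtreme.isFace {B : Set V} (hB : IsExtreme ℝ K B) (hBc : Convex ℝ B) :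
    IsFace K B := by
  refine ⟨hB.1, hBc, fun x hx y hy hmid => ?_⟩
  have hseg : (1 / 2 : ℝ) • (x + y) ∈ openSegment ℝ x y :=
    ⟨1 / 2, 1 / 2, by norm_num, by norm_num, by norm_num, by module⟩
  exact ⟨hB.left_mem_of_mem_openSegment hx hy hmid hseg,
    hB.right_mem_of_mem_openSegment hx hy hmid hseg⟩

end Faces

section Intrinsic

variable {V : Type*} [NormedAddCommGroup V] [NormedSpace ℝ V]

theorem exists_mem_openSegment_of_mem_intrinsicInterior {F : Set V} {x p : V}
    (hx : x ∈ intrinsicInterior ℝ F) (hp : p ∈ F) : ∃ q ∈ F, x ∈ openSegment ℝ p q := by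
  obtain ⟨x', hx', rfl⟩ := mem_intrinsicInterior.1 hx
  let γ : ℝ → affineSpan ℝ F := fun t =>
    ⟨AffineMap.lineMap p (x' : V) t, AffineMap.lineMap_mem t (subset_affineSpan ℝ F hp) x'.2⟩
  have hγ : Continuous γ := by fun_prop
  have hγ₁ : γ 1 = x' := Subtype.ext (AffineMap.lineMap_apply_one _ _)
  obtain ⟨t, ht, htF⟩ : ∃ t > 1, γ t ∈ interior ((↑) ⁻¹' F : Set (affineSpan ℝ F)) :=
    (hγ.continuousAt.eventually_mem (isOpen_interior.mem_nhds (hγ₁ ▸ hx'))).exists_gt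
  refine ⟨γ t, (interior_subset htF : γ t ∈ (↑) ⁻¹' F), 1 - t⁻¹, t⁻¹,
    by simp [inv_lt_one_of_one_lt₀ ht], by positivity, by ring, ?_⟩
  simp only [γ, AffineMap.lineMap_apply_module]
  match_scalars <;> field_simp; ring

theorem IsExtreme.subset_of_mem_intrinsicInterior {A B F : Set V} {x : V}
    (hB : IsExtreme ℝ A B) (hFA : F ⊆ A) (hx : x ∈ intrinsicInterior ℝ F) (hxB : x ∈ B) :
    F ⊆ B := fun _ hp =>
  let ⟨_, hq, hpq⟩ := exists_mem_openSegment_of_mem_intrinsicInterior hx hp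
  hB.left_mem_of_mem_openSegment (hFA hp) (hFA hq) hxB hpq

theorem IsFace.eq_of_mem_intrinsicInterior {K F₁ F₂ : Set V} {x : V} (hK : Convex ℝ K)
    (hF₁ : IsFace K F₁) (hF₂ : IsFace K F₂) (hx₁ : x ∈ intrinsicInterior ℝ F₁)
    (hx₂ : x ∈ intrinsicInterior ℝ F₂) : F₁ = F₂ :=
  ((hF₂.isExtreme hK).subset_of_mem_intrinsicInterior hF₁.1 hx₁
    (intrinsicInterior_subset hx₂)).antisymm
    ((hF₁.isExtreme hK).subset_of_mem_intrinsicInterior hF₂.1 hx₂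
      (intrinsicInterior_subset hx₁))

theorem IsExtreme.eq_convexHull_inter {s B : Set V} (hs : s.Finite)
    (hB : IsExtreme ℝ (convexHull ℝ s) B) (hBc : IsCompact B) (hBconv : Convex ℝ B) :
    B = convexHull ℝ (s ∩ B) := by
  refine Subset.antisymm ?_ (convexHull_min inter_subset_right hBconv)
  calc B = closure (convexHull ℝ (B.extremePoints ℝ)) :=
        (closure_convexHull_extremePoints hBc hBconv).symm
    _ ⊆ closure (convexHull ℝ (s ∩ B)) := closure_mono <| convexHull_mono fun y hy =>
        ⟨extremePoints_convexHull_subset (hB.extremePoints_subset_extremePoints hy),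
          extremePoints_subset hy⟩
    _ = convexHull ℝ (s ∩ B) :=
        ((hs.subset inter_subset_left).isCompact_convexHull ℝ).isClosed.closure_eq

end Intrinsic

section Projection

variable {V : Type*} [NormedAddCommGroup V] [InnerProductSpace ℝ V]

theorem injOn_starProjection_of_disjoint {E : Submodule ℝ V} [E.HasOrthogonalProjection]
    {F : Set V} (h : Disjoint (affineSpan ℝ F).direction Eᗮ) : InjOn E.starProjection F := by
  intro x hx y hy hxy
  have hdir : x - y ∈ (affineSpan ℝ F).direction := by
    rw [direction_affineSpan]; exact vsub_mem_vectorSpan ℝ hx hy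
  have horth : x - y ∈ Eᗮ := by
    rw [← Submodule.starProjection_apply_eq_zero_iff, map_sub, hxy, sub_self]
  exact sub_eq_zero.1 (Submodule.disjoint_def.1 h _ hdir horth)

theorem finrank_le_of_disjoint_orthogonal [FiniteDimensional ℝ V] {W E : Submodule ℝ V}
    (h : Disjoint W Eᗮ) : finrank ℝ W ≤ finrank ℝ E := by
  have := Submodule.finrank_add_finrank_le_of_disjoint h
  have := E.finrank_add_finrank_orthogonal
  omega

theorem exists_mem_toExposed_penalized {K : Set V} (hK : IsCompact K) (hKc : Convex ℝ K)
    {x : V} (hx : x ∈ K) (E : Submodule ℝ V) [E.HasOrthogonalProjection] (u : V) (c : ℝ) :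
    ∃ z ∈ K, c * ‖E.starProjection (z - x)‖ ^ 2 ≤ ⟪u, z - x⟫ ∧
      z ∈ (innerSL ℝ (u - (2 * c) • E.starProjection (z - x))).toExposed K := by
  set P := E.starProjection
  let g : V → ℝ := fun z => ⟪u, z⟫ - c * ‖P (z - x)‖ ^ 2
  obtain ⟨z, hzK, hmax⟩ := hK.exists_isMaxOn ⟨x, hx⟩ (by fun_prop : Continuous g).continuousOn
  refine ⟨z, hzK, ?_, hzK, fun y hy => ?_⟩
  · have : g x ≤ g z := hmax hx
    simp only [g, sub_self, map_zero, norm_zero] at this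
    rw [inner_sub_right]; linarith [zero_pow (M₀ := ℝ) two_ne_zero]
  · have hg : HasFDerivAt g (innerSL ℝ u - c • (2 • (innerSL ℝ (P (z - x))).comp
        (P.comp (ContinuousLinearMap.id ℝ V)))) z :=
      (innerSL ℝ u).hasFDerivAt.sub
        ((P.hasFDerivAt.comp z ((hasFDerivAt_id z).sub_const x)).norm_sq.const_mul c)
    have := hmax.localize.hasFDerivWithinAt_nonpos hg.hasFDerivWithinAt
      (sub_mem_posTangentConeAt_of_segment_subset (hKc.segment_subset hzK hy))
    have hself : ⟪P (z - x), P (y - z)⟫ = ⟪P (z - x), y - z⟫ := by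
      rw [← Submodule.inner_starProjection_left_eq_right,
        Submodule.starProjection_eq_self_iff.2 (E.starProjection_apply_mem _)]
    simp only [ContinuousLinearMap.comp_id, sub_apply, smul_apply,
      ContinuousLinearMap.comp_apply, coe_innerSL_apply, nsmul_eq_mul, Nat.cast_ofNat,
      smul_eq_mul, hself] at this
    change ⟪_, y⟫ ≤ ⟪_, z⟫
    rw [← sub_nonpos, ← inner_sub_right, inner_sub_left, real_inner_smul_left]
    linarith

end Projection

section Euclidean

variable {n : ℕ} {K F : Set (EuclideanSpace ℝ (Fin n))}
  {E : Submodule ℝ (EuclideanSpace ℝ (Fin n))} {u w : EuclideanSpace ℝ (Fin n)}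

theorem subset_toExposed_iff_mem_normalConeAtFace (hFK : F ⊆ K) :
    F ⊆ (innerSL ℝ w).toExposed K ↔ w ∈ normalConeAtFace K F := by
  have key : ∀ x z : EuclideanSpace ℝ (Fin n),
      innerSL ℝ w z ≤ innerSL ℝ w x ↔ ⟪z - x, w⟫ ≤ 0 := by
    intro x z
    change ⟪w, z⟫ ≤ ⟪w, x⟫ ↔ _
    rw [inner_sub_left, sub_nonpos, real_inner_comm z, real_inner_comm x]
  exact ⟨fun h x hx z hz => (key x z).1 ((h hx).2 z hz),
    fun h x hx => ⟨hFK hx, fun z hz => (key x z).2 (h x hx z hz)⟩⟩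

/-- The family `F̃` of the paper. -/
def upperFaces (K : Set (EuclideanSpace ℝ (Fin n)))
    (E : Submodule ℝ (EuclideanSpace ℝ (Fin n))) (u : EuclideanSpace ℝ (Fin n)) :
    Set (Set (EuclideanSpace ℝ (Fin n))) :=
  {F | IsFace K F ∧ F.Nonempty ∧ u ∈ Eᗮ.starProjection '' normalConeAtFace K F}

theorem toExposed_mem_upperFaces (hK : Convex ℝ K) (hw : Eᗮ.starProjection w = u)
    (hne : ((innerSL ℝ w).toExposed K).Nonempty) :
    (innerSL ℝ w).toExposed K ∈ upperFaces K E u :=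
  have hexp := ContinuousLinearMap.toExposed.isExposed (l := innerSL ℝ w) (A := K)
  ⟨hexp.isExtreme.isFace (hexp.convex hK), hne, w,
    (subset_toExposed_iff_mem_normalConeAtFace hexp.subset).1 subset_rfl, hw⟩

theorem setDim_le_finrank_of_subset {A : Set (EuclideanSpace ℝ (Fin n))}
    {W : Submodule ℝ (EuclideanSpace ℝ (Fin n))} (h : A ⊆ W) : setDim A ≤ finrank ℝ W := by
  refine Submodule.finrank_mono ?_
  rw [direction_affineSpan, vectorSpan_def, Submodule.span_le]
  rintro _ ⟨a, ha, b, hb, rfl⟩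
  exact W.sub_mem (h ha) (h hb)

theorem normalConeAtFace_subset_direction_orthogonal (hFK : F ⊆ K) :
    normalConeAtFace K F ⊆ (affineSpan ℝ F).directionᗮ := by
  intro w hw
  have hdir : (affineSpan ℝ F).direction ≤ (ℝ ∙ w)ᗮ := by
    rw [direction_affineSpan, vectorSpan_def, Submodule.span_le]
    rintro _ ⟨a, ha, b, hb, rfl⟩
    have h₁ := hw b hb a (hFK ha)
    have h₂ := hw a ha b (hFK hb)
    rw [← neg_sub, inner_neg_left] at h₂
    rw [SetLike.mem_coe, Submodule.mem_orthogonal_singleton_iff_inner_right, real_inner_comm]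
    change ⟪a - b, w⟫ = 0
    exact le_antisymm h₁ (by linarith)
  exact Submodule.orthogonal_le hdir
    (Submodule.le_orthogonal_orthogonal _ (Submodule.mem_span_singleton_self w))

theorem setDim_starProjection_image_le {m : EuclideanSpace ℝ (Fin n)} (hm : m ∈ Eᗮ)
    (hm0 : m ≠ 0) {C : Set (EuclideanSpace ℝ (Fin n))} (hC : C ⊆ (ℝ ∙ m)ᗮ) :
    setDim (Eᗮ.starProjection '' C) ≤ n - finrank ℝ E - 1 := by
  have himg : Eᗮ.starProjection '' C ⊆ (E ⊔ ℝ ∙ m)ᗮ := by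
    rintro _ ⟨w, hw, rfl⟩
    rw [← Submodule.inf_orthogonal]
    refine ⟨Eᗮ.starProjection_apply_mem w, ?_⟩
    rw [SetLike.mem_coe, Submodule.mem_orthogonal_singleton_iff_inner_right,
      ← Submodule.inner_starProjection_left_eq_right, Submodule.starProjection_eq_self_iff.2 hm]
    exact Submodule.mem_orthogonal_singleton_iff_inner_right.1 (hC hw)
  have hsup : finrank ℝ (E ⊔ ℝ ∙ m : Submodule ℝ _) = finrank ℝ E + 1 := by
    have hdisj : Disjoint E (ℝ ∙ m) :=
      (Submodule.orthogonal_disjoint E).mono_right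
        ((Submodule.span_singleton_le_iff_mem _ _).2 hm)
    have := Submodule.finrank_sup_add_finrank_inf_eq E (ℝ ∙ m)
    rwa [hdisj.eq_bot, finrank_bot, add_zero, finrank_span_singleton hm0] at this
  have := (E ⊔ ℝ ∙ m).finrank_add_finrank_orthogonal
  rw [finrank_euclideanSpace_fin, hsup] at this
  have := setDim_le_finrank_of_subset himg
  omega

theorem disjoint_direction_orthogonal_of_mem_upperFaces
    (hu : ∀ F : Set (EuclideanSpace ℝ (Fin n)), IsFace K F → F.Nonempty →
      setDim (Eᗮ.starProjection '' normalConeAtFace K F) ≤ n - finrank ℝ E - 1 →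
        u ∉ Eᗮ.starProjection '' normalConeAtFace K F)
    (hF : F ∈ upperFaces K E u) : Disjoint (affineSpan ℝ F).direction Eᗮ := by
  obtain ⟨hF, hFne, hFu⟩ := hF
  refine Submodule.disjoint_def.2 fun m hmF hmE => by_contra fun hm0 => hu F hF hFne ?_ hFu
  refine setDim_starProjection_image_le hmE hm0
    ((normalConeAtFace_subset_direction_orthogonal hF.1).trans ?_)
  exact Submodule.orthogonal_le ((Submodule.span_singleton_le_iff_mem _ _).2 hmF)

end Euclidean

section Shadow

variable {n : ℕ} {K : Set (EuclideanSpace ℝ (Fin n))}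
  {E : Submodule ℝ (EuclideanSpace ℝ (Fin n))} {u : EuclideanSpace ℝ (Fin n)}

theorem disjoint_image_intrinsicInterior_of_mem_upperFaces (hK : Convex ℝ K)
    (hinj : ∀ H ∈ upperFaces K E u, InjOn E.starProjection H)
    {F₁ F₂ : Set (EuclideanSpace ℝ (Fin n))} (hF₁ : F₁ ∈ upperFaces K E u)
    (hF₂ : F₂ ∈ upperFaces K E u) (hne : F₁ ≠ F₂) :
    Disjoint (E.starProjection '' intrinsicInterior ℝ F₁)
      (E.starProjection '' intrinsicInterior ℝ F₂) := by
  obtain ⟨hF₁, -, w₁, hw₁, rfl⟩ := hF₁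
  obtain ⟨hF₂, -, w₂, hw₂, hw⟩ := hF₂
  refine disjoint_left.2 ?_
  rintro _ ⟨x₁, hx₁, rfl⟩ ⟨x₂, hx₂, hx⟩
  refine hne (hF₁.eq_of_mem_intrinsicInterior hK hF₂ hx₁ ?_)
  have hx₁F := intrinsicInterior_subset hx₁
  have hx₂F := intrinsicInterior_subset hx₂
  set H := (innerSL ℝ w₁).toExposed K
  have hx₁H : x₁ ∈ H := (subset_toExposed_iff_mem_normalConeAtFace hF₁.1).2 hw₁ hx₁F
  -- `x₂ - x₁ ∈ Eᗮ` pairs with `w₁` and `w₂` as with their common projection `u`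
  have horth : x₂ - x₁ ∈ Eᗮ := by
    rw [← Submodule.starProjection_apply_eq_zero_iff, map_sub, hx, sub_self]
  have hpair : ∀ w, ⟪x₂ - x₁, w⟫ = ⟪x₂ - x₁, Eᗮ.starProjection w⟫ := fun w => by
    rw [← Submodule.inner_starProjection_left_eq_right,
      Submodule.starProjection_eq_self_iff.2 horth]
  have hle : ⟪w₁, x₁⟫ ≤ ⟪w₁, x₂⟫ := by
    have := hw₂ x₂ hx₂F x₁ (hF₁.1 hx₁F)
    rw [← neg_sub, inner_neg_left, hpair, hw, ← hpair, inner_sub_left, real_inner_comm w₁,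
      real_inner_comm w₁] at this
    linarith
  have hx₂H : x₂ ∈ H := ⟨hF₂.1 hx₂F, fun z hz => (hx₁H.2 z hz).trans hle⟩
  rwa [hinj H (toExposed_mem_upperFaces hK rfl ⟨x₁, hx₁H⟩) hx₁H hx₂H hx.symm]

theorem image_subset_iUnion_upperFaces {s : Set (EuclideanSpace ℝ (Fin n))} (hs : s.Finite)
    (hu : u ∈ Eᗮ) :
    E.starProjection '' convexHull ℝ s ⊆
      ⋃ F ∈ upperFaces (convexHull ℝ s) E u, E.starProjection '' F := by
  set K := convexHull ℝ s
  have hKc : IsCompact K := hs.isCompact_convexHull ℝ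
  set S := ⋃ T ∈ {T | T ⊆ s ∧ convexHull ℝ T ∈ upperFaces K E u},
    E.starProjection '' convexHull ℝ T
  have hS : IsClosed S :=
    (hs.finite_subsets.subset fun T hT => hT.1).isClosed_biUnion fun T hT =>
      (((hs.subset hT.1).isCompact_convexHull ℝ).image E.starProjection.continuous).isClosed
  refine image_subset_iff.2 fun x hx => ?_
  refine (iUnion₂_subset fun T hT => subset_biUnion_of_mem hT.2 : S ⊆ _)
    (hS.closure_subset (Metric.mem_closure_iff.2 fun ε hε => ?_))
  obtain ⟨B, hB⟩ := (hKc.image_of_continuousOn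
    (by fun_prop : Continuous fun z => ⟪u, z - x⟫).continuousOn).bddAbove
  -- a penalty this large keeps the shadow of the maximiser within `ε` of `P_E x`
  obtain ⟨z, hzK, hzx, hz⟩ := exists_mem_toExposed_penalized hKc (convex_convexHull ℝ s) hx E u
    ((B + 1) / ε ^ 2)
  set w := u - (2 * ((B + 1) / ε ^ 2)) • E.starProjection (z - x)
  have hw : Eᗮ.starProjection w = u := by
    rw [map_sub, map_smul, Submodule.starProjection_orthogonal_apply_eq_zero
      (E.starProjection_apply_mem _), smul_zero, sub_zero,
      Submodule.starProjection_eq_self_iff.2 hu]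
  have hH := toExposed_mem_upperFaces (convex_convexHull ℝ s) hw ⟨z, hz⟩
  have hexp := ContinuousLinearMap.toExposed.isExposed (l := innerSL ℝ w) (A := K)
  rw [hexp.isExtreme.eq_convexHull_inter hs (hexp.isCompact hKc)
    (hexp.convex (convex_convexHull ℝ s))] at hz hH
  refine ⟨E.starProjection z, mem_biUnion ⟨inter_subset_left, hH⟩ ⟨z, hz, rfl⟩, ?_⟩
  have hB₀ : 0 ≤ B := by simpa using hB (mem_image_of_mem _ hx)
  have hzB : ⟪u, z - x⟫ ≤ B := hB (mem_image_of_mem _ hzK)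
  have hsq : ‖E.starProjection (z - x)‖ ^ 2 < ε ^ 2 := by
    rw [div_mul_eq_mul_div, div_le_iff₀ (by positivity)] at hzx
    nlinarith
  rw [dist_eq_norm, norm_sub_rev, ← map_sub]
  exact (pow_lt_pow_iff_left₀ (norm_nonneg _) hε.le two_ne_zero).1 hsq

end Shadow

theorem shadow_system_of_faces_of_polytope_general
    (n d : ℕ)
    (s : Finset (EuclideanSpace ℝ (Fin n)))
    (K : Set (EuclideanSpace ℝ (Fin n)))
    (hK : K = convexHull ℝ (↑s : Set (EuclideanSpace ℝ (Fin n))))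
    (E : Submodule ℝ (EuclideanSpace ℝ (Fin n))) (hEd : Module.finrank ℝ E = d)
    (PE Pp : EuclideanSpace ℝ (Fin n) → EuclideanSpace ℝ (Fin n))
    (hPE : PE = fun x => (Submodule.orthogonalProjectionOnto E x : EuclideanSpace ℝ (Fin n)))
    (hPp : Pp = fun x => (Submodule.orthogonalProjectionOnto Eᗮ x : EuclideanSpace ℝ (Fin n)))
    (u : EuclideanSpace ℝ (Fin n)) (huE : u ∈ Eᗮ)
    (hu : ∀ F : Set (EuclideanSpace ℝ (Fin n)), IsFace K F → F.Nonempty →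
      setDim (Pp '' normalConeAtFace K F) ≤ n - d - 1 → u ∉ Pp '' normalConeAtFace K F)
    (𝓕 : Set (Set (EuclideanSpace ℝ (Fin n))))
    (h𝓕 : 𝓕 = {F | IsFace K F ∧ F.Nonempty ∧ u ∈ Pp '' normalConeAtFace K F}) :
    (∀ F₁ ∈ 𝓕, ∀ F₂ ∈ 𝓕, F₁ ≠ F₂ →
        Disjoint (PE '' intrinsicInterior ℝ F₁) (PE '' intrinsicInterior ℝ F₂)) ∧
    (⋃ F ∈ 𝓕, PE '' F) = PE '' K ∧
    (∀ F ∈ 𝓕, setDim F ≤ d) ∧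
    (∀ F ∈ 𝓕, setDim F = d → Set.InjOn PE F) := by
  subst hK h𝓕 hEd
  obtain rfl : PE = E.starProjection := hPE
  obtain rfl : Pp = Eᗮ.starProjection := hPp
  have hdisj : ∀ F ∈ upperFaces (convexHull ℝ ↑s) E u,
      Disjoint (affineSpan ℝ F).direction Eᗮ :=
    fun F hF => disjoint_direction_orthogonal_of_mem_upperFaces hu hF
  have hinj : ∀ F ∈ upperFaces (convexHull ℝ ↑s) E u, InjOn E.starProjection F :=
    fun F hF => injOn_starProjection_of_disjoint (hdisj F hF)
  refine ⟨fun F₁ hF₁ F₂ hF₂ => disjoint_image_intrinsicInterior_of_mem_upperFaces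
      (convex_convexHull ℝ _) hinj hF₁ hF₂, ?_,
    fun F hF => finrank_le_of_disjoint_orthogonal (hdisj F hF), fun F hF _ => hinj F hF⟩
  exact (iUnion₂_subset fun F hF => image_mono hF.1.1).antisymm
    (image_subset_iUnion_upperFaces s.finite_toSet huE)

theorem shadow_system_of_faces_of_polytope
    (n d : ℕ) (hd : 1 ≤ d) (hdn : d ≤ n - 1)
    (s : Finset (EuclideanSpace ℝ (Fin n))) (hs : s.Nonempty)
    (K : Set (EuclideanSpace ℝ (Fin n)))
    (hK : K = convexHull ℝ (↑s : Set (EuclideanSpace ℝ (Fin n))))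
    (E : Submodule ℝ (EuclideanSpace ℝ (Fin n))) (hEd : Module.finrank ℝ E = d)
    (PE Pp : EuclideanSpace ℝ (Fin n) → EuclideanSpace ℝ (Fin n))
    (hPE : PE = fun x => (Submodule.orthogonalProjectionOnto E x : EuclideanSpace ℝ (Fin n)))
    (hPp : Pp = fun x => (Submodule.orthogonalProjectionOnto Eᗮ x : EuclideanSpace ℝ (Fin n)))
    (u : EuclideanSpace ℝ (Fin n)) (huE : u ∈ Eᗮ)
    (hu : ∀ F : Set (EuclideanSpace ℝ (Fin n)), IsFace K F → F.Nonempty →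
      setDim (Pp '' normalConeAtFace K F) ≤ n - d - 1 → u ∉ Pp '' normalConeAtFace K F)
    (𝓕 : Set (Set (EuclideanSpace ℝ (Fin n))))
    (h𝓕 : 𝓕 = {F | IsFace K F ∧ F.Nonempty ∧ u ∈ Pp '' normalConeAtFace K F}) :
    (∀ F₁ ∈ 𝓕, ∀ F₂ ∈ 𝓕, F₁ ≠ F₂ →
        Disjoint (PE '' intrinsicInterior ℝ F₁) (PE '' intrinsicInterior ℝ F₂)) ∧
    (⋃ F ∈ 𝓕, PE '' F) = PE '' K ∧
    (∀ F ∈ 𝓕, setDim F ≤ d) ∧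
    (∀ F ∈ 𝓕, setDim F = d → Set.InjOn PE F) :=
  shadow_system_of_faces_of_polytope_general n d s K hK E hEd PE Pp hPE hPp u huE hu 𝓕 h𝓕
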